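/- Fix r < t, n ∈ ℤ_{≥1} and R > 0, and set K := (1 + t − r)(10R + 69·n!). Then for every T > 0 with T(t − r) ≥ 2π, every t_0 ∈ (r, t), and all w, v ∈ ℝ^n with max_i |w_i| ≤ R and max_i |v_i| ≤ R, one has 69·n!·exp(n^3 T (t−r)/24) · ∫_{ { y ∈ ℝ^n : max_i |y_i| > K } } T^n Π_{i=1}^n p(T(t_0 − r), T(y_i − v_i)) · p(T(t − t_0), T(w_i − y_i)) dy ≤ (1/2)·Π_{i=1}^n p(T(t − r), T(v_i − w_i)). -/

import Mathlib

open MeasureTheory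

/-- The standard heat kernel `p(s, x) = (2πs)^{-1/2} exp(-x²/(2s))`. -/
noncomputable def heatKernel (s x : ℝ) : ℝ :=
  (Real.sqrt (2 * Real.pi * s))⁻¹ * Real.exp (-x ^ 2 / (2 * s))

lemma heatKernel_pos {s : ℝ} (hs : 0 < s) (x : ℝ) : 0 < heatKernel s x := by
  unfold heatKernel
  have := Real.pi_pos
  positivity

lemma heatKernel_neg (s x : ℝ) : heatKernel s (-x) = heatKernel s x := by
  simp [heatKernel]

lemma heatKernel_factor {s u : ℝ} (hs : 0 < s) (hu : 0 < u) (a b : ℝ) :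
    heatKernel s a * heatKernel u b
      = heatKernel (s + u) (a + b)
        * heatKernel (s * u / (s + u)) ((u * a - s * b) / (s + u)) := by
  have hsu : 0 < s + u := by linarith
  have hpi := Real.pi_pos
  unfold heatKernel
  have h1 : Real.sqrt (2 * Real.pi * s) * Real.sqrt (2 * Real.pi * u)
      = Real.sqrt (2 * Real.pi * (s + u)) * Real.sqrt (2 * Real.pi * (s * u / (s + u))) := by
    rw [← Real.sqrt_mul (by positivity), ← Real.sqrt_mul (by positivity)]
    congr 1
    field_simp
  have h2 : Real.exp (-a ^ 2 / (2 * s)) * Real.exp (-b ^ 2 / (2 * u))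
      = Real.exp (-(a + b) ^ 2 / (2 * (s + u)))
        * Real.exp (-((u * a - s * b) / (s + u)) ^ 2 / (2 * (s * u / (s + u)))) := by
    rw [← Real.exp_add, ← Real.exp_add]
    congr 1
    field_simp
    ring
  rw [mul_mul_mul_comm, mul_mul_mul_comm (Real.sqrt (2 * Real.pi * (s + u)))⁻¹,
    ← mul_inv, ← mul_inv, h1, h2]

lemma nat_cube_le : ∀ n : ℕ, n ^ 3 ≤ 6 * (Nat.factorial n) ^ 2 := by
  intro n
  induction n with
  | zero => norm_num
  | succ k ih =>
      have h1 : k + 1 ≤ Nat.factorial (k + 1) := Nat.self_le_factorial _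
      have h2 : k + 1 ≤ 6 * Nat.factorial k ^ 2 := by
        nlinarith [Nat.self_le_factorial k, Nat.one_le_iff_ne_zero.mpr (Nat.factorial_ne_zero k)]
      calc (k + 1) ^ 3 = (k + 1) ^ 2 * (k + 1) := by ring
        _ ≤ (k + 1) ^ 2 * (6 * Nat.factorial k ^ 2) := Nat.mul_le_mul_left _ h2
        _ = 6 * ((k + 1) * Nat.factorial k) ^ 2 := by ring
        _ = 6 * Nat.factorial (k + 1) ^ 2 := by rw [Nat.factorial_succ]

set_option maxHeartbeats 4000000 in
/-- the contribution to the Chapman–Kolmogorov integral coming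
from the complement of the cube `[-K, K]^n` is at most half of the product of
heat kernels, where `K = (1 + t - r)(10R + 69·n!)`. -/
theorem tail_chapman_kolmogorov_bound
    (n : ℕ) (hn : 1 ≤ n) (r t : ℝ) (hrt : r < t) (R : ℝ) (hR : 0 < R)
    (K : ℝ) (hK : K = (1 + t - r) * (10 * R + 69 * (Nat.factorial n : ℝ)))
    (T : ℝ) (hT : 0 < T) (hTtr : 2 * Real.pi ≤ T * (t - r))
    (t₀ : ℝ) (ht₀r : r < t₀) (ht₀t : t₀ < t)
    (w v : Fin n → ℝ) (hw : ∀ i, |w i| ≤ R) (hv : ∀ i, |v i| ≤ R) :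
    69 * (Nat.factorial n : ℝ) * Real.exp ((n : ℝ) ^ 3 * T * (t - r) / 24)
        * ∫ y in {y : Fin n → ℝ | ∃ i, K < |y i|},
            (T ^ n * ∏ i, (heatKernel (T * (t₀ - r)) (T * (y i - v i))
              * heatKernel (T * (t - t₀)) (T * (w i - y i))))
      ≤ (1 / 2) * ∏ i, heatKernel (T * (t - r)) (T * (v i - w i)) := by
  have hπ := Real.pi_pos
  set τ : ℝ := t - r with hτdef
  clear_value τ
  have hτ : 0 < τ := by rw [hτdef]; linarith
  set N : ℝ := (Nat.factorial n : ℝ) with hNdef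
  clear_value N
  have hN1 : (1 : ℝ) ≤ N := by
    rw [hNdef]; exact_mod_cast Nat.one_le_iff_ne_zero.mpr (Nat.factorial_ne_zero n)
  have hNn : (n : ℝ) ≤ N := by rw [hNdef]; exact_mod_cast Nat.self_le_factorial n
  have hn3 : (n : ℝ) ^ 3 ≤ 6 * N ^ 2 := by rw [hNdef]; exact_mod_cast nat_cube_le n
  set s : ℝ := T * (t₀ - r) with hsdef
  set u : ℝ := T * (t - t₀) with hudef
  clear_value s u
  have hs : 0 < s := by rw [hsdef]; exact mul_pos hT (by linarith)
  have hu : 0 < u := by rw [hudef]; exact mul_pos hT (by linarith)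
  have hsupos : 0 < s + u := by linarith
  have hsu : s + u = T * τ := by rw [hsdef, hudef, hτdef]; ring
  have hTτ : 6 ≤ T * τ := by nlinarith [Real.pi_gt_three]
  set σ : ℝ := s * u / (s + u) with hσdef
  clear_value σ
  have hσ : 0 < σ := by rw [hσdef]; positivity
  set d : ℝ := T ^ 2 / (2 * σ) with hddef
  clear_value d
  have hd : 0 < d := by rw [hddef]; positivity
  set c : ℝ := T * (Real.sqrt (2 * Real.pi * σ))⁻¹ with hcdef
  clear_value c
  have hc : 0 < c := by rw [hcdef]; have := Real.sqrt_pos.mpr (by positivity : (0:ℝ) < 2 * Real.pi * σ); positivity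
  obtain ⟨m, hmdef⟩ : ∃ m : Fin n → ℝ, ∀ i, m i = v i + (s / (s + u)) * (w i - v i) :=
    ⟨_, fun i => rfl⟩
  have hm : ∀ i, |m i| ≤ R := by
    intro i
    have h1 := abs_le.mp (hv i)
    have h2 := abs_le.mp (hw i)
    have hl0 : 0 ≤ s / (s + u) := by positivity
    have hl1 : s / (s + u) ≤ 1 := by rw [div_le_one hsupos]; linarith
    rw [hmdef i, abs_le]
    constructor <;> nlinarith [h1.1, h1.2, h2.1, h2.2]
  have hg : ∀ z : ℝ, T * heatKernel σ (T * z) = c * Real.exp (-d * z ^ 2) := by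
    intro z
    unfold heatKernel
    rw [show -(T * z) ^ 2 / (2 * σ) = -d * z ^ 2 by rw [hddef]; field_simp]
    rw [hcdef]; ring
  have hKR : 69 * τ * N ≤ K - R := by
    rw [hK, show (1 : ℝ) + t - r = 1 + τ by rw [hτdef]; ring]
    nlinarith [mul_pos hτ hR]
  have hKRnn : 0 ≤ K - R := le_trans (by positivity) hKR
  set B : ℝ := d / 2 * (K - R) ^ 2 with hBdef
  set A : ℝ := (n : ℝ) ^ 3 * T * τ / 24 with hAdef
  clear_value B A
  -- quantitative bounds
  have hσub : σ * 4 ≤ T * τ := by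
    rw [hσdef, ← hsu, div_mul_eq_mul_div, div_le_iff₀ hsupos]
    nlinarith [sq_nonneg (s - u)]
  have hdlb : 2 * T ≤ d * τ := by
    rw [hddef, div_mul_eq_mul_div, le_div_iff₀ (by positivity)]
    nlinarith [mul_le_mul_of_nonneg_left hσub hT.le]
  have hBlb : T * τ * 4761 * N ^ 2 ≤ B := by
    have hKR2 : (69 * τ * N) ^ 2 ≤ (K - R) ^ 2 := pow_le_pow_left₀ (by positivity) hKR 2
    have h5 : T * (69 * τ * N) ^ 2 ≤ T * (K - R) ^ 2 := mul_le_mul_of_nonneg_left hKR2 hT.le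
    have h6 : 2 * T * (K - R) ^ 2 ≤ d * τ * (K - R) ^ 2 :=
      mul_le_mul_of_nonneg_right hdlb (sq_nonneg _)
    have h7 : T * τ * 4761 * N ^ 2 * (2 * τ) ≤ d / 2 * (K - R) ^ 2 * (2 * τ) := by nlinarith
    have := le_of_mul_le_mul_right h7 (by positivity : (0 : ℝ) < 2 * τ)
    rw [hBdef]; linarith
  have hAub : A ≤ N ^ 2 * (T * τ) / 4 := by
    rw [hAdef]
    nlinarith [mul_le_mul_of_nonneg_right hn3 (by positivity : (0 : ℝ) ≤ T * τ / 24)]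
  have hBA : (n : ℝ) + 138 * N ≤ B - A := by
    have hN2 : N ≤ N ^ 2 := by nlinarith
    have hq : 0 ≤ (T * τ - 6) * N ^ 2 := mul_nonneg (by linarith) (sq_nonneg N)
    nlinarith
  have key : 138 * N * Real.sqrt 2 ^ n ≤ Real.exp (B - A) := by
    have hs2 : Real.sqrt 2 ≤ 2 := by
      nlinarith [Real.sq_sqrt (by norm_num : (0:ℝ) ≤ 2), Real.sqrt_nonneg 2]
    have he2 : (2 : ℝ) ≤ Real.exp 1 := by nlinarith [Real.add_one_le_exp 1]
    have e1 : Real.sqrt 2 ^ n ≤ Real.exp (n : ℝ) := by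
      calc Real.sqrt 2 ^ n ≤ Real.exp 1 ^ n :=
            pow_le_pow_left₀ (Real.sqrt_nonneg 2) (by linarith) n
        _ = Real.exp (n : ℝ) := Real.exp_one_pow n
    have e2 : 138 * N ≤ Real.exp (B - A - n) := by
      have h1 : 138 * N ≤ B - A - n := by linarith
      linarith [Real.add_one_le_exp (B - A - (n : ℝ))]
    calc 138 * N * Real.sqrt 2 ^ n
        ≤ Real.exp (B - A - n) * Real.exp (n : ℝ) :=
          mul_le_mul e2 e1 (by positivity) (Real.exp_nonneg _)
      _ = Real.exp (B - A) := by rw [← Real.exp_add]; ring_nf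
  -- the product of kernels on the RHS
  set P : ℝ := ∏ i, heatKernel (T * τ) (T * (v i - w i)) with hPdef
  clear_value P
  have hP : 0 < P := by
    rw [hPdef]
    exact Finset.prod_pos fun i _ => heatKernel_pos (by positivity) _
  -- pointwise factorization
  have hFy : ∀ y : Fin n → ℝ,
      T ^ n * ∏ i, (heatKernel s (T * (y i - v i)) * heatKernel u (T * (w i - y i)))
        = P * ∏ i, (c * Real.exp (-d * (y i - m i) ^ 2)) := by
    intro y
    have step : ∀ i, T * (heatKernel s (T * (y i - v i)) * heatKernel u (T * (w i - y i)))
        = heatKernel (T * τ) (T * (v i - w i)) * (c * Real.exp (-d * (y i - m i) ^ 2)) := by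
      intro i
      have h0 := heatKernel_factor hs hu (T * (y i - v i)) (T * (w i - y i))
      have ha : T * (y i - v i) + T * (w i - y i) = T * (w i - v i) := by ring
      have hb : (u * (T * (y i - v i)) - s * (T * (w i - y i))) / (s + u) = T * (y i - m i) := by
        rw [hmdef i]
        field_simp
        ring
      rw [ha, hb, ← hσdef, hsu] at h0
      calc T * (heatKernel s (T * (y i - v i)) * heatKernel u (T * (w i - y i)))
          = heatKernel (T * τ) (T * (w i - v i)) * (T * heatKernel σ (T * (y i - m i))) := by
            rw [h0]; ring
        _ = heatKernel (T * τ) (T * (v i - w i)) * (c * Real.exp (-d * (y i - m i) ^ 2)) := by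
            rw [hg (y i - m i), show T * (w i - v i) = -(T * (v i - w i)) by ring,
              heatKernel_neg]
    calc T ^ n * ∏ i, (heatKernel s (T * (y i - v i)) * heatKernel u (T * (w i - y i)))
        = ∏ i, (T * (heatKernel s (T * (y i - v i)) * heatKernel u (T * (w i - y i)))) := by
          rw [show (∏ i, (T * (heatKernel s (T * (y i - v i)) * heatKernel u (T * (w i - y i)))))
              = (∏ _i : Fin n, T) * ∏ i, (heatKernel s (T * (y i - v i))
                  * heatKernel u (T * (w i - y i))) from Finset.prod_mul_distrib,
            Finset.prod_const, Finset.card_univ, Fintype.card_fin]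
      _ = ∏ i, (heatKernel (T * τ) (T * (v i - w i)) * (c * Real.exp (-d * (y i - m i) ^ 2))) :=
          Finset.prod_congr rfl fun i _ => step i
      _ = P * ∏ i, (c * Real.exp (-d * (y i - m i) ^ 2)) := by
          rw [Finset.prod_mul_distrib, hPdef]
  -- pointwise tail bound
  have hGH : ∀ y : Fin n → ℝ, (∃ i, K < |y i|) →
      (∏ i, (c * Real.exp (-d * (y i - m i) ^ 2)))
        ≤ Real.exp (-B) * ∏ i, (c * Real.exp (-(d / 2) * (y i - m i) ^ 2)) := by
    intro y hy
    obtain ⟨i, hi⟩ := hy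
    have hfac : ∀ j, c * Real.exp (-d * (y j - m j) ^ 2)
        ≤ c * Real.exp (-(d / 2) * (y j - m j) ^ 2) := by
      intro j
      exact mul_le_mul_of_nonneg_left
        (Real.exp_le_exp.mpr (by nlinarith [sq_nonneg (y j - m j)])) hc.le
    have hKRi : (K - R) ^ 2 ≤ (y i - m i) ^ 2 := by
      have h1 : K - R ≤ |y i - m i| := by
        have h2 := abs_sub_abs_le_abs_sub (y i) (m i)
        have h3 := hm i
        linarith [le_of_lt hi]
      calc (K - R) ^ 2 ≤ |y i - m i| ^ 2 := pow_le_pow_left₀ hKRnn h1 2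
        _ = (y i - m i) ^ 2 := sq_abs _
    have hfi : c * Real.exp (-d * (y i - m i) ^ 2)
        ≤ Real.exp (-B) * (c * Real.exp (-(d / 2) * (y i - m i) ^ 2)) := by
      have h4 : Real.exp (-d * (y i - m i) ^ 2)
          ≤ Real.exp (-B) * Real.exp (-(d / 2) * (y i - m i) ^ 2) := by
        rw [← Real.exp_add]
        apply Real.exp_le_exp.mpr
        rw [hBdef]
        nlinarith
      calc c * Real.exp (-d * (y i - m i) ^ 2)
          ≤ c * (Real.exp (-B) * Real.exp (-(d / 2) * (y i - m i) ^ 2)) :=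
            mul_le_mul_of_nonneg_left h4 hc.le
        _ = Real.exp (-B) * (c * Real.exp (-(d / 2) * (y i - m i) ^ 2)) := by ring
    calc ∏ j, (c * Real.exp (-d * (y j - m j) ^ 2))
        = (c * Real.exp (-d * (y i - m i) ^ 2))
            * ∏ j ∈ Finset.univ.erase i, (c * Real.exp (-d * (y j - m j) ^ 2)) :=
          (Finset.mul_prod_erase _ _ (Finset.mem_univ i)).symm
      _ ≤ (Real.exp (-B) * (c * Real.exp (-(d / 2) * (y i - m i) ^ 2)))
            * ∏ j ∈ Finset.univ.erase i, (c * Real.exp (-(d / 2) * (y j - m j) ^ 2)) := by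
          apply mul_le_mul hfi
            (Finset.prod_le_prod
              (fun j _ => mul_nonneg hc.le (Real.exp_nonneg _))
              (fun j _ => hfac j))
            (Finset.prod_nonneg fun j _ => mul_nonneg hc.le (Real.exp_nonneg _))
            (mul_nonneg (Real.exp_nonneg _) (mul_nonneg hc.le (Real.exp_nonneg _)))
      _ = Real.exp (-B) * ∏ j, (c * Real.exp (-(d / 2) * (y j - m j) ^ 2)) := by
          rw [mul_assoc, Finset.mul_prod_erase Finset.univ
            (fun j => c * Real.exp (-(d / 2) * (y j - m j) ^ 2)) (Finset.mem_univ i)]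
  -- integrability of the dominating gaussian
  have hH1 : ∀ j : Fin n, Integrable (fun x : ℝ => c * Real.exp (-(d / 2) * (x - m j) ^ 2)) := by
    intro j
    have h0 : Integrable (fun x : ℝ => Real.exp (-(d / 2) * x ^ 2)) :=
      integrable_exp_neg_mul_sq (by positivity)
    exact (h0.comp_sub_right (m j)).const_mul c
  have hHn : Integrable (fun y : Fin n → ℝ =>
      ∏ j, (c * Real.exp (-(d / 2) * (y j - m j) ^ 2))) :=
    Integrable.fintype_prod (f := fun j x => c * Real.exp (-(d / 2) * (x - m j) ^ 2)) hH1
  have hHnn : ∀ y : Fin n → ℝ, 0 ≤ ∏ j, (c * Real.exp (-(d / 2) * (y j - m j) ^ 2)) :=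
    fun y => Finset.prod_nonneg fun j _ => mul_nonneg hc.le (Real.exp_nonneg _)
  -- value of the full-space integral
  have hsq2 : c * Real.sqrt (Real.pi / (d / 2)) = Real.sqrt 2 := by
    have h1 : (c * Real.sqrt (Real.pi / (d / 2))) ^ 2 = 2 := by
      rw [mul_pow, Real.sq_sqrt (by positivity : (0:ℝ) ≤ Real.pi / (d / 2)), hcdef, hddef,
        mul_pow, inv_pow, Real.sq_sqrt (by positivity : (0:ℝ) ≤ 2 * Real.pi * σ)]
      field_simp
    have h2 : 0 ≤ c * Real.sqrt (Real.pi / (d / 2)) :=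
      mul_nonneg hc.le (Real.sqrt_nonneg _)
    calc c * Real.sqrt (Real.pi / (d / 2))
        = Real.sqrt ((c * Real.sqrt (Real.pi / (d / 2))) ^ 2) := (Real.sqrt_sq h2).symm
      _ = Real.sqrt 2 := by rw [h1]
  have hHint : ∀ j : Fin n, ∫ x : ℝ, c * Real.exp (-(d / 2) * (x - m j) ^ 2) = Real.sqrt 2 := by
    intro j
    rw [MeasureTheory.integral_const_mul,
      integral_sub_right_eq_self (fun x => Real.exp (-(d / 2) * x ^ 2)) (m j),
      integral_gaussian, hsq2]
  have hHfull : ∫ y : Fin n → ℝ, ∏ j, (c * Real.exp (-(d / 2) * (y j - m j) ^ 2))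
      = Real.sqrt 2 ^ n := by
    rw [MeasureTheory.integral_fintype_prod_volume_eq_prod (ι := Fin n)
      (f := fun j x => c * Real.exp (-(d / 2) * (x - m j) ^ 2))]
    simp only [hHint]
    rw [Finset.prod_const, Finset.card_univ, Fintype.card_fin]
  -- measurability of the tail set
  have hSm : MeasurableSet {y : Fin n → ℝ | ∃ i, K < |y i|} := by
    have hset : {y : Fin n → ℝ | ∃ i, K < |y i|} = ⋃ i, {y : Fin n → ℝ | K < |y i|} := by
      ext y; simp
    rw [hset]
    exact MeasurableSet.iUnion fun i =>
      measurableSet_lt measurable_const ((measurable_pi_apply i).abs)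
  -- the chain of integral bounds
  have hIle : (∫ y in {y : Fin n → ℝ | ∃ i, K < |y i|},
      (T ^ n * ∏ i, (heatKernel s (T * (y i - v i)) * heatKernel u (T * (w i - y i)))))
      ≤ (Real.exp (-B) * P) * Real.sqrt 2 ^ n := by
    have step1 : (∫ y in {y : Fin n → ℝ | ∃ i, K < |y i|},
        (T ^ n * ∏ i, (heatKernel s (T * (y i - v i)) * heatKernel u (T * (w i - y i)))))
        ≤ ∫ y in {y : Fin n → ℝ | ∃ i, K < |y i|},
            (Real.exp (-B) * P) * ∏ j, (c * Real.exp (-(d / 2) * (y j - m j) ^ 2)) := by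
      apply integral_mono_of_nonneg
      · exact Filter.Eventually.of_forall fun y =>
          mul_nonneg (pow_nonneg hT.le n)
            (Finset.prod_nonneg fun i _ =>
              mul_nonneg (heatKernel_pos hs _).le (heatKernel_pos hu _).le)
      · exact (hHn.const_mul _).restrict
      · rw [Filter.EventuallyLE, ae_restrict_iff' hSm]
        refine Filter.Eventually.of_forall fun y hy => ?_
        rw [hFy y]
        calc P * ∏ i, (c * Real.exp (-d * (y i - m i) ^ 2))
            ≤ P * (Real.exp (-B) * ∏ j, (c * Real.exp (-(d / 2) * (y j - m j) ^ 2))) :=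
              mul_le_mul_of_nonneg_left (hGH y hy) hP.le
          _ = (Real.exp (-B) * P) * ∏ j, (c * Real.exp (-(d / 2) * (y j - m j) ^ 2)) := by
              ring
    have step2 : (∫ y in {y : Fin n → ℝ | ∃ i, K < |y i|},
          (Real.exp (-B) * P) * ∏ j, (c * Real.exp (-(d / 2) * (y j - m j) ^ 2)))
        = (Real.exp (-B) * P) * ∫ y in {y : Fin n → ℝ | ∃ i, K < |y i|},
            ∏ j, (c * Real.exp (-(d / 2) * (y j - m j) ^ 2)) :=
      MeasureTheory.integral_const_mul _ _
    have step3 : (∫ y in {y : Fin n → ℝ | ∃ i, K < |y i|},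
          ∏ j, (c * Real.exp (-(d / 2) * (y j - m j) ^ 2)))
        ≤ ∫ y : Fin n → ℝ, ∏ j, (c * Real.exp (-(d / 2) * (y j - m j) ^ 2)) :=
      setIntegral_le_integral hHn (Filter.Eventually.of_forall hHnn)
    calc (∫ y in {y : Fin n → ℝ | ∃ i, K < |y i|},
        (T ^ n * ∏ i, (heatKernel s (T * (y i - v i)) * heatKernel u (T * (w i - y i)))))
        ≤ (Real.exp (-B) * P) * ∫ y in {y : Fin n → ℝ | ∃ i, K < |y i|},
            ∏ j, (c * Real.exp (-(d / 2) * (y j - m j) ^ 2)) := by rw [← step2]; exact step1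
      _ ≤ (Real.exp (-B) * P) * ∫ y : Fin n → ℝ,
            ∏ j, (c * Real.exp (-(d / 2) * (y j - m j) ^ 2)) :=
          mul_le_mul_of_nonneg_left step3 (by positivity)
      _ = (Real.exp (-B) * P) * Real.sqrt 2 ^ n := by rw [hHfull]
  -- final numeric assembly
  have hfin : 69 * N * Real.exp A * ((Real.exp (-B) * P) * Real.sqrt 2 ^ n)
      ≤ 1 / 2 * P := by
    have hx : 69 * N * Real.sqrt 2 ^ n * (Real.exp (B - A))⁻¹ ≤ 1 / 2 := by
      rw [← div_eq_mul_inv, div_le_iff₀ (Real.exp_pos _)]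
      linarith
    have hexp : Real.exp A * Real.exp (-B) = (Real.exp (B - A))⁻¹ := by
      rw [← Real.exp_add, ← Real.exp_neg]; ring_nf
    calc 69 * N * Real.exp A * ((Real.exp (-B) * P) * Real.sqrt 2 ^ n)
        = (69 * N * Real.sqrt 2 ^ n * (Real.exp A * Real.exp (-B))) * P := by ring
      _ = (69 * N * Real.sqrt 2 ^ n * (Real.exp (B - A))⁻¹) * P := by rw [hexp]
      _ ≤ 1 / 2 * P := mul_le_mul_of_nonneg_right hx hP.le
  calc 69 * N * Real.exp A * ∫ y in {y : Fin n → ℝ | ∃ i, K < |y i|},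
        (T ^ n * ∏ i, (heatKernel s (T * (y i - v i)) * heatKernel u (T * (w i - y i))))
      ≤ 69 * N * Real.exp A * ((Real.exp (-B) * P) * Real.sqrt 2 ^ n) :=
        mul_le_mul_of_nonneg_left hIle (by positivity)
    _ ≤ 1 / 2 * P := hfin
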